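/- arXiv:cs/0203002 — 10 statements merged into one kernel-verified Lean document; each statement's English description precedes it below -/
import Mathlib

section
/- Let D be a finite set of defaults such that every default of D has rank zero, i.e., for each (a,b) ∈ D the antecedent a is consistent with D̃. Define the level of a model m as the number of defaults of D that m violates, and define the relation a |~ b to hold iff every model of a whose level is minimal among the levels of models of a satisfies b (vacuously if a has no models). Then a |~ b holds if and only if for every maxbase F of D for a one has F̃, a ⊨ b. -/
open Set

/-- A default is a pair `(a, b)` of formulas, a formula being a set of models. -/
abbrev Default (M : Type*) := Set M × Set M

variable {M : Type*}

/-- The model `m` violates the default `d = (a, b)` iff `m ∈ a \ b`. -/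
def Violates (m : M) (d : Default M) : Prop := m ∈ d.1 \ d.2

/-- The formula `c` is consistent with `B̃`, the set of material counterparts of the
defaults in `B`, iff `c ∩ ⋂ B̃ ≠ ∅`. -/
def ConsistentWith (c : Set M) (B : Set (Default M)) : Prop :=
  (c ∩ ⋂ d ∈ B, (d.1ᶜ ∪ d.2)).Nonempty

/-- `B̃, c ⊨ d` : every model of `c` together with all material counterparts of `B`
is a model of `d`. -/
def EntailsWith (B : Set (Default M)) (c d : Set M) : Prop :=
  c ∩ ⋂ e ∈ B, (e.1ᶜ ∪ e.2) ⊆ d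

/-- The level of the model `m` : the number of defaults of `D` violated by `m`. -/
noncomputable def level (D : Set (Default M)) (m : M) : ℕ :=
  {d ∈ D | Violates m d}.ncard

/-- `F` is a maxbase of `D` for `c` : `F ⊆ D`, `c` is consistent with `F̃`, and no
subset of `D` of strictly larger cardinality has its material counterparts
consistent with `c`. -/
def Maxbase (D : Set (Default M)) (c : Set M) (F : Set (Default M)) : Prop :=
  F ⊆ D ∧ ConsistentWith c F ∧
    ∀ F' : Set (Default M), F' ⊆ D → F.ncard < F'.ncard → ¬ ConsistentWith c F'

/-!
Since `level D m = |D| - |satisfied D m|`, the models of `c` of minimal level are those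
satisfying as many material counterparts of `D` as possible. A model of `c ∩ ⋂ F̃` satisfies
all of `F`, so for a maxbase `F` it satisfies a maximum number of them; conversely, for a
model `m` of `c` of minimal level, `satisfied D m` is a maxbase for `c` whose material
counterparts `m` satisfies.
-/

def satisfied (D : Set (Default M)) (m : M) : Set (Default M) :=
  {d ∈ D | m ∈ d.1ᶜ ∪ d.2}

section Satisfied

variable {D F : Set (Default M)} {c : Set M} {m m' : M}

lemma satisfied_subset : satisfied D m ⊆ D := fun _ hd => hd.1

lemma mem_iInter_satisfied : m ∈ ⋂ d ∈ satisfied D m, (d.1ᶜ ∪ d.2) :=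
  mem_iInter₂.mpr fun _ hd => hd.2

lemma consistentWith_satisfied (hm : m ∈ c) : ConsistentWith c (satisfied D m) :=
  ⟨m, hm, mem_iInter_satisfied⟩

lemma subset_satisfied (hF : F ⊆ D) (hm : m ∈ ⋂ d ∈ F, (d.1ᶜ ∪ d.2)) :
    F ⊆ satisfied D m :=
  fun d hd => ⟨hF hd, mem_iInter₂.mp hm d hd⟩

lemma level_add_ncard_satisfied (hD : D.Finite) (m : M) :
    level D m + (satisfied D m).ncard = D.ncard := by
  have hunion : {d ∈ D | Violates m d} ∪ satisfied D m = D := by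
    ext d
    simp only [satisfied, Violates, mem_union, mem_ofPred_eq, mem_sdiff, mem_compl_iff]
    tauto
  have hdisj : Disjoint {d ∈ D | Violates m d} (satisfied D m) :=
    disjoint_left.mpr fun _ hv hs => hs.2.elim (· hv.2.1) hv.2.2
  rw [level, ← ncard_union_eq hdisj (hD.subset fun _ hd => hd.1) (hD.subset satisfied_subset),
    hunion]

lemma level_le_level_iff (hD : D.Finite) :
    level D m ≤ level D m' ↔ (satisfied D m').ncard ≤ (satisfied D m).ncard := by
  have := level_add_ncard_satisfied hD m
  have := level_add_ncard_satisfied hD m'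
  omega

lemma Maxbase.ncard_satisfied_le (hF : Maxbase D c F) (hm : m ∈ c) :
    (satisfied D m).ncard ≤ F.ncard :=
  not_lt.mp fun hlt => hF.2.2 _ satisfied_subset hlt (consistentWith_satisfied hm)

lemma Maxbase.ncard_satisfied_eq (hD : D.Finite) (hF : Maxbase D c F) (hm : m ∈ c)
    (hmF : m ∈ ⋂ d ∈ F, (d.1ᶜ ∪ d.2)) : (satisfied D m).ncard = F.ncard :=
  (hF.ncard_satisfied_le hm).antisymm <|
    ncard_le_ncard (subset_satisfied hF.1 hmF) (hD.subset satisfied_subset)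

lemma Maxbase.level_le (hD : D.Finite) (hF : Maxbase D c F) (hm : m ∈ c)
    (hmF : m ∈ ⋂ d ∈ F, (d.1ᶜ ∪ d.2)) (hm' : m' ∈ c) : level D m ≤ level D m' :=
  (level_le_level_iff hD).mpr <|
    hF.ncard_satisfied_eq hD hm hmF ▸ hF.ncard_satisfied_le hm'

lemma maxbase_satisfied (hD : D.Finite) (hm : m ∈ c)
    (hmin : ∀ m' ∈ c, level D m ≤ level D m') : Maxbase D c (satisfied D m) := by
  refine ⟨satisfied_subset, consistentWith_satisfied hm, ?_⟩
  rintro F' hF' hlt ⟨m', hm'c, hm'F'⟩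
  have hle : F'.ncard ≤ (satisfied D m').ncard :=
    ncard_le_ncard (subset_satisfied hF' hm'F') (hD.subset satisfied_subset)
  have := (level_le_level_iff hD).mp (hmin m' hm'c)
  omega

end Satisfied

theorem lex_rank_zero_maxbase_characterization_general
    (D : Set (Default M)) (hD : D.Finite)
    (a b : Set M) :
    (∀ m ∈ a, (∀ m' ∈ a, level D m ≤ level D m') → m ∈ b) ↔
      ∀ F : Set (Default M), Maxbase D a F → EntailsWith F a b := by
  constructor
  · intro h F hF m ⟨hma, hmF⟩
    exact h m hma fun m' hm' => hF.level_le hD hma hmF hm'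
  · intro h m hma hmin
    exact h _ (maxbase_satisfied hD hma hmin) ⟨hma, mem_iInter_satisfied⟩

/-- **Theorem 1.** If every default of the finite set `D` has rank zero (its antecedent
is consistent with `D̃`), then the consequence relation defined by ranking models by the
number of defaults they violate is characterized by:
`a |~ b` iff for every maxbase `F` of `D` for `a`, `F̃, a ⊨ b`. -/
theorem lex_rank_zero_maxbase_characterization
    (D : Set (Default M)) (hD : D.Finite)
    (hrank0 : ∀ d ∈ D, ConsistentWith d.1 D) (a b : Set M) :
    (∀ m ∈ a, (∀ m' ∈ a, level D m ≤ level D m') → m ∈ b) ↔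
      ∀ F : Set (Default M), Maxbase D a F → EntailsWith F a b :=
  lex_rank_zero_maxbase_characterization_general D hD a b
end

section
/- Let D be a finite set of defaults. Define the level of a model m as the number of defaults of D that m violates, and define the relation a |~ b to hold iff every model of a whose level is minimal among the levels of models of a satisfies b (vacuously if a has no models). Then |~ satisfies rational monotonicity: whenever a |~ b and it is not the case that a |~ cᶜ, also a ∩ c |~ b. -/
open Set

variable {M : Type*}

theorem IsMinOn.of_inter {α β : Type*} [Preorder β] {f : α → β} {a c : Set α} {m m₀ : α}
    (hm₀ : IsMinOn f a m₀) (hm₀ac : m₀ ∈ a ∩ c) (hm : IsMinOn f (a ∩ c) m) : IsMinOn f a m :=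
  isMinOn_iff.2 fun x hx => (isMinOn_iff.1 hm m₀ hm₀ac).trans (isMinOn_iff.1 hm₀ x hx)

theorem rational_monotonicity_of_rank {α β : Type*} [Preorder β] (f : α → β) {a b c : Set α}
    (hab : ∀ m ∈ a, IsMinOn f a m → m ∈ b) (hnc : ¬ ∀ m ∈ a, IsMinOn f a m → m ∈ cᶜ) :
    ∀ m ∈ a ∩ c, IsMinOn f (a ∩ c) m → m ∈ b := by
  push Not at hnc
  obtain ⟨m₀, hm₀a, hm₀min, hm₀c⟩ := hnc
  intro m hm hmin
  exact hab m hm.1 (hm₀min.of_inter ⟨hm₀a, notMem_compl_iff.1 hm₀c⟩ hmin)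

theorem level_relation_rational_monotonicity_general
    (D : Set (Default M)) (a b c : Set M)
    (hab : ∀ m ∈ a, (∀ m' ∈ a, level D m ≤ level D m') → m ∈ b)
    (hnc : ¬ ∀ m ∈ a, (∀ m' ∈ a, level D m ≤ level D m') → m ∈ cᶜ) :
    ∀ m ∈ a ∩ c, (∀ m' ∈ a ∩ c, level D m ≤ level D m') → m ∈ b := by
  simp only [← isMinOn_iff] at hab hnc ⊢
  exact rational_monotonicity_of_rank (level D) hab hnc

/-- Rational monotonicity of the consequence relation defined by ranking models by the
number of defaults of `D` they violate. -/
theorem level_relation_rational_monotonicity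
    (D : Set (Default M)) (hD : D.Finite) (a b c : Set M)
    (hab : ∀ m ∈ a, (∀ m' ∈ a, level D m ≤ level D m') → m ∈ b)
    (hnc : ¬ ∀ m ∈ a, (∀ m' ∈ a, level D m ≤ level D m') → m ∈ cᶜ) :
    ∀ m ∈ a ∩ c, (∀ m' ∈ a ∩ c, level D m ≤ level D m') → m ∈ b :=
  level_relation_rational_monotonicity_general D a b c hab hnc
end

section
/- Let D be a finite set of defaults with n = |D|, and define the level of a model m as the number of defaults of D that m violates. If a formula a is satisfied by some model of level i, then there exists a maxbase of D for a, and every maxbase of D for a has cardinality at least n − i. -/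
open Set

variable {M : Type*}

/-! The defaults of `D` not violated by a model `m ∈ a` form a subset of `D` consistent with `a`
of size `n - level D m`. Since `D` is finite, a consistent subset of largest cardinality exists;
it is a maxbase, and every maxbase is at least as large as that witness. -/

theorem consistentWith_iff {c : Set M} {B : Set (Default M)} :
    ConsistentWith c B ↔ ∃ m ∈ c, ∀ d ∈ B, ¬ Violates m d := by
  simp only [ConsistentWith, Violates, Set.Nonempty, mem_inter_iff, mem_iInter, mem_union,
    mem_compl_iff, mem_sdiff, not_and_or, not_not]

theorem consistentWith_nonViolated {c : Set M} {m : M} (hm : m ∈ c) (D : Set (Default M)) :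
    ConsistentWith c {d ∈ D | ¬ Violates m d} :=
  consistentWith_iff.2 ⟨m, hm, fun _ hd => hd.2⟩

theorem ncard_nonViolated {D : Set (Default M)} (hD : D.Finite) (m : M) :
    {d ∈ D | ¬ Violates m d}.ncard = D.ncard - level D m := by
  have hV : {d ∈ D | Violates m d} ⊆ D := sep_subset D _
  rw [level, ← ncard_sdiff hV (hD.subset hV)]
  congr 1
  ext d
  simp only [mem_sep_iff, mem_sdiff]
  tauto

theorem Maxbase.ncard_le {D : Set (Default M)} {c : Set M} {F G : Set (Default M)}
    (hF : Maxbase D c F) (hGD : G ⊆ D) (hG : ConsistentWith c G) : G.ncard ≤ F.ncard :=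
  not_lt.1 fun hlt => hF.2.2 G hGD hlt hG

theorem exists_maxbase {D : Set (Default M)} (hD : D.Finite) {c : Set M} {G : Set (Default M)}
    (hGD : G ⊆ D) (hG : ConsistentWith c G) : ∃ F, Maxbase D c F := by
  have hfin : {F | F ⊆ D ∧ ConsistentWith c F}.Finite :=
    hD.finite_subsets.subset fun _ hF => hF.1
  obtain ⟨F, ⟨hFD, hF⟩, hFmax⟩ := hfin.exists_maximalFor ncard _ ⟨G, hGD, hG⟩
  exact ⟨F, hFD, hF, fun F' hF'D hlt hF' => hlt.not_ge (hFmax ⟨hF'D, hF'⟩ hlt.le)⟩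

/-- If `a` is satisfied by some model of level `i`, then there is a maxbase of `D` for
`a`, and every maxbase of `D` for `a` has cardinality at least `n - i`, `n = |D|`. -/
theorem maxbase_exists_of_model_of_level
    (D : Set (Default M)) (hD : D.Finite) (a : Set M) (i : ℕ)
    (h : ∃ m ∈ a, level D m = i) :
    (∃ F : Set (Default M), Maxbase D a F) ∧
      ∀ F : Set (Default M), Maxbase D a F → D.ncard - i ≤ F.ncard := by
  obtain ⟨m, hma, rfl⟩ := h
  have hcon := consistentWith_nonViolated hma D
  refine ⟨exists_maxbase hD (sep_subset D _) hcon, fun F hF => ?_⟩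
  rw [← ncard_nonViolated hD m]
  exact hF.ncard_le (sep_subset D _) hcon
end

section
/- Let D be a finite set of defaults with n = |D|, and define the level of a model m as the number of defaults of D that m violates. If F is a maxbase of D for a formula a and F has cardinality k, then there is a model of level n − k that satisfies a, and no model of level strictly smaller than n − k satisfies a. -/
open Set

variable {M : Type*}

/-! The defaults of `D` satisfied by a model of `a` have their material counterparts consistent
with `a`, so by maximality there are at most `|F|` of them; a model witnessing the consistency
of `F̃` with `a` satisfies all of `F`, hence exactly `|F|` defaults. The level is the
complementary count. -/

def satisfiedDefaults (D : Set (Default M)) (m : M) : Set (Default M) :=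
  {d ∈ D | ¬ Violates m d}

lemma mem_materialCounterpart_iff {m : M} {d : Default M} :
    m ∈ d.1ᶜ ∪ d.2 ↔ ¬ Violates m d := by
  simp only [Violates, mem_union, mem_compl_iff, mem_sdiff]
  tauto

lemma level_add_ncard_satisfiedDefaults {D : Set (Default M)} (hD : D.Finite) (m : M) :
    level D m + (satisfiedDefaults D m).ncard = D.ncard :=
  ncard_inter_add_ncard_sdiff_eq_ncard D {d | Violates m d} hD

lemma consistentWith_satisfiedDefaults {c : Set M} {m : M} (hm : m ∈ c) (D : Set (Default M)) :
    ConsistentWith c (satisfiedDefaults D m) :=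
  ⟨m, hm, mem_iInter₂.2 fun _ hd ↦ mem_materialCounterpart_iff.2 hd.2⟩

lemma subset_satisfiedDefaults {D B : Set (Default M)} {m : M} (hBD : B ⊆ D)
    (hm : m ∈ ⋂ d ∈ B, (d.1ᶜ ∪ d.2)) : B ⊆ satisfiedDefaults D m :=
  fun d hd ↦ ⟨hBD hd, mem_materialCounterpart_iff.1 (mem_iInter₂.1 hm d hd)⟩

namespace Maxbase

variable {D F : Set (Default M)} {c : Set M}

lemma ncard_satisfiedDefaults_le (hF : Maxbase D c F) {m : M} (hm : m ∈ c) :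
    (satisfiedDefaults D m).ncard ≤ F.ncard :=
  not_lt.1 fun hlt ↦ hF.2.2 _ (sep_subset _ _) hlt (consistentWith_satisfiedDefaults hm D)

lemma exists_ncard_satisfiedDefaults_eq (hF : Maxbase D c F) (hD : D.Finite) :
    ∃ m ∈ c, (satisfiedDefaults D m).ncard = F.ncard := by
  obtain ⟨m, hmc, hmF⟩ := hF.2.1
  refine ⟨m, hmc, le_antisymm (hF.ncard_satisfiedDefaults_le hmc) ?_⟩
  exact ncard_le_ncard (subset_satisfiedDefaults hF.1 hmF) (hD.subset (sep_subset _ _))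

end Maxbase

/-- If `F` is a maxbase of `D` for `a` of cardinality `k`, then some model of level
`n - k` satisfies `a` (`n = |D|`), and no model of strictly smaller level satisfies `a`. -/
theorem model_level_of_maxbase
    (D : Set (Default M)) (hD : D.Finite) (a : Set M)
    (F : Set (Default M)) (k : ℕ) (hF : Maxbase D a F) (hk : F.ncard = k) :
    (∃ m ∈ a, level D m = D.ncard - k) ∧
      ∀ m ∈ a, D.ncard - k ≤ level D m := by
  subst hk
  constructor
  · obtain ⟨m, hma, hm⟩ := hF.exists_ncard_satisfiedDefaults_eq hD
    refine ⟨m, hma, ?_⟩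
    have := level_add_ncard_satisfiedDefaults hD m
    omega
  · intro m hma
    have := level_add_ncard_satisfiedDefaults hD m
    have := hF.ncard_satisfiedDefaults_le hma
    omega
end

section
/- Let D be a finite set of defaults and suppose the formula a has a finite rank with respect to D. Then the pair (a,b) belongs to the rational closure of D if and only if every model of a that is ≪-minimal among the models of a (comparing models m by the relation V(m) ≪ V(m'), where V(m) is the set of defaults of D violated by m) satisfies b. -/
/-!
Let `i` be the rank of `a`. Unwinding the tuples, `ℓ(V(m)) > k - i` holds exactly when `m`
violates no default of `E_i`, because `E_i` is `D_∞ ∪ D_{k-1} ∪ ⋯ ∪ D_i`. As `a` is consistent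
with `Ẽ_i` but not with `Ẽ_{i-1}`, the largest value of `ℓ(V(m))` over the models `m` of `a`
is `k + 1 - i`, so the `≪`-minimal models of `a` are its models that satisfy `Ẽ_i`. Hence the
right-hand side says that `a ∩ bᶜ` is inconsistent with `Ẽ_i`, which is what it means for
`a ∩ bᶜ` to have no rank or a rank larger than `i`.
-/

open Set

variable {M : Type*}

/-- `E₀ = D`, `E_{i+1} = {(a,b) ∈ E_i | a is not consistent with Ẽ_i}`. -/
def Ee (D : Set (Default M)) : ℕ → Set (Default M)
  | 0 => D
  | (i + 1) => {d ∈ Ee D i | ¬ ConsistentWith d.1 (Ee D i)}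

/-- `c` has rank `i` with respect to `D` : `i` is the least natural number such that
`c` is consistent with `Ẽ_i`. -/
def HasRank (D : Set (Default M)) (c : Set M) (i : ℕ) : Prop :=
  ConsistentWith c (Ee D i) ∧ ∀ j < i, ¬ ConsistentWith c (Ee D j)

/-- `D_i = E_i \ E_{i+1}`. -/
def Dlev (D : Set (Default M)) (i : ℕ) : Set (Default M) := Ee D i \ Ee D (i + 1)

/-- `D_∞ = ⋂_i E_i`. -/
def Dinf (D : Set (Default M)) : Set (Default M) := ⋂ i, Ee D i

/-- `k` is the order of `D` : the least `k` such that `D_i = ∅` for every finite `i ≥ k`. -/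
def IsOrder (D : Set (Default M)) (k : ℕ) : Prop :=
  (∀ i, k ≤ i → Dlev D i = ∅) ∧ ∀ k', (∀ i, k' ≤ i → Dlev D i = ∅) → k ≤ k'

/-- The `(k+1)`-tuple associated to `X ⊆ D` : `n₀ = |D_∞ ∩ X|` and
`n_i = |D_{k-i} ∩ X|` for `1 ≤ i ≤ k`. -/
noncomputable def tup (D : Set (Default M)) (k : ℕ) (X : Set (Default M)) (i : ℕ) : ℕ :=
  if i = 0 then (Dinf D ∩ X).ncard else (Dlev D (k - i) ∩ X).ncard

/-- The seriousness ordering : `X ≺ Y` iff the tuple of `X` is lexicographically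
smaller than the tuple of `Y`. -/
def Serious (D : Set (Default M)) (k : ℕ) (X Y : Set (Default M)) : Prop :=
  ∃ j ≤ k, (∀ i < j, tup D k X i = tup D k Y i) ∧ tup D k X j < tup D k Y j

/-- `V(m)` : the set of defaults of `D` violated by the model `m`. -/
def Vset (D : Set (Default M)) (m : M) : Set (Default M) := {d ∈ D | Violates m d}

/-- The lexicographic closure `D^l` : `(a,b) ∈ D^l` iff every model of `a` that is
`≺`-minimal among the models of `a` satisfies `b` (models being compared via the
seriousness ordering of the sets of defaults they violate). -/
def LexClos (D : Set (Default M)) (k : ℕ) (a b : Set M) : Prop :=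
  ∀ m ∈ a, (∀ m' ∈ a, ¬ Serious D k (Vset D m') (Vset D m)) → m ∈ b

/-- `B` is a basis for `a` : `B ⊆ D`, `a` is consistent with `B̃`, and there is no
`B' ⊆ D` whose material counterparts are consistent with `a` and with `B ≺ B'`. -/
def LexBasis (D : Set (Default M)) (k : ℕ) (a : Set M) (B : Set (Default M)) : Prop :=
  B ⊆ D ∧ ConsistentWith a B ∧
    ∀ B' : Set (Default M), B' ⊆ D → ConsistentWith a B' → ¬ Serious D k B B'

/-- The rational closure of `D` : the pairs `(a,b)` such that either `a` has no rank,
or the rank of `a` is strictly smaller than the rank of `a ∩ bᶜ` (where `no rank`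
counts as larger than every natural number). -/
def RatClos (D : Set (Default M)) (a b : Set M) : Prop :=
  (¬ ∃ i, HasRank D a i) ∨
    ∃ i, HasRank D a i ∧
      ((¬ ∃ j, HasRank D (a ∩ bᶜ) j) ∨ ∃ j, HasRank D (a ∩ bᶜ) j ∧ i < j)

/-- `ℓ(X) = l` : `l` is the least index `i ≤ k` with `tup X i ≠ 0`, and `l = k + 1`
if the tuple of `X` is all zero. -/
def EllIs (D : Set (Default M)) (k : ℕ) (X : Set (Default M)) (l : ℕ) : Prop :=
  (l ≤ k ∧ tup D k X l ≠ 0 ∧ ∀ i < l, tup D k X i = 0) ∨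
    (l = k + 1 ∧ ∀ i ≤ k, tup D k X i = 0)

/-- `X ≪ Y` iff `ℓ(X) > ℓ(Y)`. -/
def Ll (D : Set (Default M)) (k : ℕ) (X Y : Set (Default M)) : Prop :=
  ∃ lx ly, EllIs D k X lx ∧ EllIs D k Y ly ∧ ly < lx

variable {D : Set (Default M)} {k : ℕ}

lemma Ee_antitone (D : Set (Default M)) : Antitone (Ee D) :=
  antitone_nat_of_succ_le fun _ _ hd => hd.1

lemma Ee_subset (D : Set (Default M)) (i : ℕ) : Ee D i ⊆ D :=
  Ee_antitone D (Nat.zero_le i)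

lemma Ee_eq_Dlev_union (D : Set (Default M)) (i : ℕ) : Ee D i = Dlev D i ∪ Ee D (i + 1) :=
  (sdiff_union_of_subset fun _ hd => hd.1).symm

section Order

variable (hk : ∀ i, k ≤ i → Dlev D i = ∅)
include hk

lemma Ee_eq_of_le {i : ℕ} (hi : k ≤ i) : Ee D i = Ee D k := by
  induction i, hi using Nat.le_induction with
  | base => rfl
  | succ n hn ih =>
    rw [← ih, Ee_eq_Dlev_union D n, hk n hn, empty_union]

lemma Dinf_eq_Ee : Dinf D = Ee D k :=
  (iInter_subset _ k).antisymm fun _ hd => mem_iInter.mpr fun i =>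
    (le_total k i).elim (fun hi => (Ee_eq_of_le hk hi).symm ▸ hd)
      (fun hi => Ee_antitone D hi hd)

end Order

lemma ConsistentWith.anti {c : Set M} {B B' : Set (Default M)} (h : ConsistentWith c B)
    (hB : B' ⊆ B) : ConsistentWith c B' :=
  Set.Nonempty.mono (inter_subset_inter_right c (biInter_subset_biInter_left hB)) h

lemma consistentWith_iff_exists_disjoint {c : Set M} {B : Set (Default M)} (hB : B ⊆ D) :
    ConsistentWith c B ↔ ∃ m ∈ c, Disjoint (Vset D m) B := by
  refine exists_congr fun m => and_congr_right fun _ => ?_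
  simp only [mem_iInter, disjoint_right, Vset, mem_sep_iff, Violates, mem_union, mem_compl_iff,
    mem_sdiff]
  exact forall₂_congr fun d hd => by have := hB hd; tauto

section Rank

variable {c : Set M}

lemma HasRank.unique {i j : ℕ} (hi : HasRank D c i) (hj : HasRank D c j) : i = j := by
  by_contra hne
  rcases Nat.lt_or_gt_of_ne hne with h | h
  · exact hj.2 i h hi.1
  · exact hi.2 j h hj.1

lemma exists_hasRank {i : ℕ} (h : ConsistentWith c (Ee D i)) : ∃ j, HasRank D c j := by
  classical
  have h' : ∃ j, ConsistentWith c (Ee D j) := ⟨i, h⟩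
  exact ⟨Nat.find h', Nat.find_spec h', fun _ => Nat.find_min h'⟩

lemma HasRank.le_order (hk : ∀ i, k ≤ i → Dlev D i = ∅) {i : ℕ} (h : HasRank D c i) :
    i ≤ k := by
  by_contra! hki
  exact h.2 k hki (Ee_eq_of_le hk hki.le ▸ h.1)

lemma not_consistentWith_Ee_iff {i : ℕ} :
    ¬ ConsistentWith c (Ee D i) ↔
      (¬ ∃ j, HasRank D c j) ∨ ∃ j, HasRank D c j ∧ i < j := by
  constructor
  · intro hi
    refine or_iff_not_imp_left.mpr fun hr => ?_
    obtain ⟨j, hj⟩ := not_not.mp hr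
    exact ⟨j, hj, lt_of_not_ge fun hji => hi (hj.1.anti (Ee_antitone D hji))⟩
  · rintro (hr | ⟨j, hj, hij⟩) hi
    · exact hr (exists_hasRank hi)
    · exact hj.2 i hij hi

lemma ratClos_iff_not_consistentWith {a b : Set M} {i : ℕ} (hi : HasRank D a i) :
    RatClos D a b ↔ ¬ ConsistentWith (a ∩ bᶜ) (Ee D i) := by
  rw [not_consistentWith_Ee_iff, RatClos]
  refine ⟨?_, fun h => Or.inr ⟨i, hi, h⟩⟩
  rintro (hr | ⟨i', hi', h⟩)
  · exact absurd ⟨i, hi⟩ hr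
  · rwa [hi'.unique hi] at h

end Rank

section Ell

variable {X Y : Set (Default M)} {l l' : ℕ}

lemma exists_ellIs (D : Set (Default M)) (k : ℕ) (X : Set (Default M)) : ∃ l, EllIs D k X l := by
  classical
  by_cases h : ∃ i ≤ k, tup D k X i ≠ 0
  · have h' : ∃ i, tup D k X i ≠ 0 := h.imp fun _ => And.right
    obtain ⟨i, hik, hi⟩ := h
    exact ⟨Nat.find h', Or.inl ⟨(Nat.find_min' h' hi).trans hik, Nat.find_spec h',
      fun j hj => not_not.mp (Nat.find_min h' hj)⟩⟩
  · push Not at h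
    exact ⟨k + 1, Or.inr ⟨rfl, h⟩⟩

lemma EllIs.le (h : EllIs D k X l) : l ≤ k + 1 := by
  rcases h with ⟨hl, -⟩ | ⟨rfl, -⟩ <;> omega

lemma EllIs.lt_iff (h : EllIs D k X l) {n : ℕ} (hn : n ≤ k) :
    n < l ↔ ∀ i < n + 1, tup D k X i = 0 := by
  rcases h with ⟨-, hl, hlt⟩ | ⟨rfl, hall⟩
  · exact ⟨fun hnl i hi => hlt i (by omega),
      fun h => lt_of_not_ge fun hln => hl (h l (by omega))⟩
  · exact ⟨fun _ i hi => hall i (by omega), fun _ => by omega⟩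

lemma EllIs.unique (h : EllIs D k X l) (h' : EllIs D k X l') : l = l' := by
  rcases h with ⟨hl, ht, hm⟩ | ⟨rfl, hall⟩ <;> rcases h' with ⟨hl', ht', hm'⟩ | ⟨rfl, hall'⟩
  · by_contra hne
    rcases Nat.lt_or_gt_of_ne hne with h | h
    · exact ht (hm' l h)
    · exact ht' (hm l' h)
  · exact absurd (hall' l hl) ht
  · exact absurd (hall l' hl') ht'
  · rfl

lemma ll_iff (hX : EllIs D k X l) (hY : EllIs D k Y l') : Ll D k X Y ↔ l' < l :=
  ⟨fun ⟨_, _, hX', hY', hlt⟩ => hX.unique hX' ▸ hY.unique hY' ▸ hlt,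
    fun hlt => ⟨l, l', hX, hY, hlt⟩⟩

variable (hD : D.Finite) (hk : ∀ i, k ≤ i → Dlev D i = ∅)
include hD hk

lemma forall_tup_eq_zero_iff {n : ℕ} (hn : n ≤ k) :
    (∀ i < n + 1, tup D k X i = 0) ↔ Disjoint X (Ee D (k - n)) := by
  induction n with
  | zero =>
    simp only [zero_add, Nat.lt_one_iff, forall_eq]
    rw [tup, if_pos rfl, Nat.sub_zero, ← Dinf_eq_Ee hk,
      ncard_eq_zero (hD.subset fun _ hd => iInter_subset _ 0 hd.1), inter_comm,
      disjoint_iff_inter_eq_empty]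
  | succ n ih =>
    have hfin : (Dlev D (k - (n + 1)) ∩ X).Finite :=
      hD.subset fun _ hd => Ee_subset D _ hd.1.1
    rw [Nat.forall_lt_succ_right, ih (by omega), tup, if_neg n.succ_ne_zero,
      Ee_eq_Dlev_union D (k - (n + 1)), show k - (n + 1) + 1 = k - n by omega,
      disjoint_union_right, and_comm, ncard_eq_zero hfin, ← disjoint_iff_inter_eq_empty,
      disjoint_comm]

lemma EllIs.lt_iff_disjoint (h : EllIs D k X l) {n : ℕ} (hn : n ≤ k) :
    n < l ↔ Disjoint X (Ee D (k - n)) :=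
  (h.lt_iff hn).trans (forall_tup_eq_zero_iff hD hk hn)

lemma HasRank.ellIs_le {a : Set M} {i : ℕ} (hi : HasRank D a i) {m : M} (hm : m ∈ a)
    (h : EllIs D k (Vset D m) l) : l ≤ k + 1 - i := by
  have hik := hi.le_order hk
  by_contra! hlt
  have hn : k + 1 - i ≤ k := by have := h.le; omega
  have hdisj := (h.lt_iff_disjoint hD hk hn).mp hlt
  rw [show k - (k + 1 - i) = i - 1 by omega] at hdisj
  exact hi.2 (i - 1) (by omega)
    ((consistentWith_iff_exists_disjoint (Ee_subset D _)).mpr ⟨m, hm, hdisj⟩)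

lemma llMinimal_iff_disjoint {a : Set M} {i : ℕ} (hi : HasRank D a i) {m : M} :
    (∀ m' ∈ a, ¬ Ll D k (Vset D m') (Vset D m)) ↔ Disjoint (Vset D m) (Ee D i) := by
  have hik := hi.le_order hk
  obtain ⟨l, hl⟩ := exists_ellIs D k (Vset D m)
  have hl_iff : k - i < l ↔ Disjoint (Vset D m) (Ee D i) := by
    rw [hl.lt_iff_disjoint hD hk (Nat.sub_le k i), Nat.sub_sub_self hik]
  rw [← hl_iff]
  constructor
  · intro hmin
    obtain ⟨m₀, hm₀, hdisj⟩ := (consistentWith_iff_exists_disjoint (Ee_subset D i)).mp hi.1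
    obtain ⟨l₀, hl₀⟩ := exists_ellIs D k (Vset D m₀)
    have hl₀_gt : k - i < l₀ :=
      (hl₀.lt_iff_disjoint hD hk (Nat.sub_le k i)).mpr (by rwa [Nat.sub_sub_self hik])
    have hl₀_le : ¬ l < l₀ := (ll_iff hl₀ hl).not.mp (hmin m₀ hm₀)
    omega
  · intro hlt m' hm' hll
    obtain ⟨l', hl'⟩ := exists_ellIs D k (Vset D m')
    have hl_lt : l < l' := (ll_iff hl' hl).mp hll
    have hl'_le : l' ≤ k + 1 - i := hi.ellIs_le hD hk hm' hl'
    omega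

end Ell

/-- A conditional assertion `(a,b)` with `a` of finite rank belongs to the rational
closure of `D` iff it is satisfied by the modular model in which each propositional
model is ranked by the `≪` ordering on the set of defaults it violates. -/
theorem rational_closure_iff_ll_minimal
    (D : Set (Default M)) (hD : D.Finite) (k : ℕ) (hk : IsOrder D k)
    (a b : Set M) (hfin : ∃ i, HasRank D a i) :
    RatClos D a b ↔
      ∀ m ∈ a, (∀ m' ∈ a, ¬ Ll D k (Vset D m') (Vset D m)) → m ∈ b := by
  obtain ⟨i, hi⟩ := hfin
  rw [ratClos_iff_not_consistentWith hi, consistentWith_iff_exists_disjoint (Ee_subset D i)]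
  refine ⟨fun h m hm hmin => ?_, fun h ⟨m, ⟨hm, hmb⟩, hdisj⟩ => ?_⟩
  · by_contra hmb
    exact h ⟨m, ⟨hm, hmb⟩, (llMinimal_iff_disjoint hD hk.1 hi).mp hmin⟩
  · exact hmb (h m hm ((llMinimal_iff_disjoint hD hk.1 hi).mpr hdisj))
end

section
/- Let D be a finite set of defaults. The pair (a,b) belongs to the lexicographic closure D^l of D if and only if for every basis B for a one has B̃, a ⊨ b. -/
open Set

variable {M : Type*}

/-!
A subset of `D` is consistent with `a` iff it lies in `D \ V(m)` for some model `m` of `a`,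
and `D \ V(m)` itself is. The tuple of `X` counts the elements of `X` level by level, so it
is monotone in `X` and, `D` being finite, complementation in `D` reverses the seriousness
ordering. Hence `D \ V(m)` is a basis for `a` exactly when `m` is `≺`-minimal among the
models of `a`, and every model of `a` satisfying the material counterparts of a basis is
`≺`-minimal.
-/

lemma ee_subset (D : Set (Default M)) : ∀ i, Ee D i ⊆ D
  | 0 => subset_rfl
  | i + 1 => fun _ hd => ee_subset D i hd.1

def tupLevel (D : Set (Default M)) (k i : ℕ) : Set (Default M) :=
  if i = 0 then Dinf D else Dlev D (k - i)

lemma tup_eq_ncard_tupLevel_inter (D : Set (Default M)) (k : ℕ) (X : Set (Default M))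
    (i : ℕ) : tup D k X i = (tupLevel D k i ∩ X).ncard := by
  unfold tup tupLevel
  split_ifs <;> rfl

lemma tupLevel_subset (D : Set (Default M)) (k i : ℕ) : tupLevel D k i ⊆ D := by
  unfold tupLevel
  split_ifs
  · exact iInter_subset (Ee D) 0
  · exact sdiff_subset.trans (ee_subset D _)

lemma exists_first_lt_of_le_of_lt {β : Type*} [LinearOrder β] {f g : ℕ → β} {j : ℕ}
    (hle : ∀ i < j, f i ≤ g i) (hlt : f j < g j) :
    ∃ j' ≤ j, (∀ i < j', f i = g i) ∧ f j' < g j' := by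
  classical
  have hex : ∃ i, f i ≠ g i := ⟨j, hlt.ne⟩
  have hfind_le : Nat.find hex ≤ j := Nat.find_min' hex hlt.ne
  refine ⟨Nat.find hex, hfind_le, fun i hi => not_not.1 (Nat.find_min hex hi), ?_⟩
  rcases hfind_le.eq_or_lt with heq | hlt'
  · exact heq ▸ hlt
  · exact (hle _ hlt').lt_of_ne (Nat.find_spec hex)

section Seriousness

variable {D : Set (Default M)} {k : ℕ} {X Y Z : Set (Default M)}

lemma tup_mono (hD : D.Finite) (k i : ℕ) (hXY : X ⊆ Y) : tup D k X i ≤ tup D k Y i := by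
  simp only [tup_eq_ncard_tupLevel_inter]
  exact ncard_le_ncard (inter_subset_inter_right _ hXY)
    ((hD.subset (tupLevel_subset D k i)).inter_of_left _)

lemma tup_sdiff_add (hD : D.Finite) (k i : ℕ) (X : Set (Default M)) :
    tup D k (D \ X) i + tup D k X i = tup D k D i := by
  simp only [tup_eq_ncard_tupLevel_inter]
  have hL := tupLevel_subset D k i
  rw [← inter_sdiff_assoc, inter_eq_left.2 hL, add_comm,
    ncard_inter_add_ncard_sdiff_eq_ncard _ _ (hD.subset hL)]

lemma serious_of_subset_of_serious (hD : D.Finite) (hXY : X ⊆ Y) (h : Serious D k Y Z) :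
    Serious D k X Z := by
  obtain ⟨j, hjk, heq, hlt⟩ := h
  obtain ⟨j', hj', hfirst⟩ := exists_first_lt_of_le_of_lt
    (f := tup D k X) (g := tup D k Z) (fun i hi => (tup_mono hD k i hXY).trans_eq (heq i hi))
    ((tup_mono hD k j hXY).trans_lt hlt)
  exact ⟨j', hj'.trans hjk, hfirst⟩

lemma serious_of_serious_of_subset (hD : D.Finite) (h : Serious D k X Y) (hYZ : Y ⊆ Z) :
    Serious D k X Z := by
  obtain ⟨j, hjk, heq, hlt⟩ := h
  obtain ⟨j', hj', hfirst⟩ := exists_first_lt_of_le_of_lt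
    (f := tup D k X) (g := tup D k Z) (fun i hi => (heq i hi).trans_le (tup_mono hD k i hYZ))
    (hlt.trans_le (tup_mono hD k j hYZ))
  exact ⟨j', hj'.trans hjk, hfirst⟩

lemma Serious.sdiff_swap (hD : D.Finite) (h : Serious D k X Y) :
    Serious D k (D \ Y) (D \ X) := by
  obtain ⟨j, hjk, heq, hlt⟩ := h
  refine ⟨j, hjk, fun i hi => ?_, ?_⟩
  · have := heq i hi
    have := tup_sdiff_add hD k i X
    have := tup_sdiff_add hD k i Y
    omega
  · have := tup_sdiff_add hD k j X
    have := tup_sdiff_add hD k j Y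
    omega

end Seriousness

section Models

variable {D B : Set (Default M)} {k : ℕ} {a : Set M} {m m' : M}

lemma mem_biInter_material_iff :
    m ∈ ⋂ d ∈ B, (d.1ᶜ ∪ d.2) ↔ ∀ d ∈ B, ¬ Violates m d := by
  simp only [mem_iInter, mem_union, mem_compl_iff, Violates, mem_sdiff]
  refine forall₂_congr fun _ _ => ?_
  tauto

lemma vset_subset (D : Set (Default M)) (m : M) : Vset D m ⊆ D :=
  fun _ hd => hd.1

lemma mem_biInter_material_sdiff_vset (D : Set (Default M)) (m : M) :
    m ∈ ⋂ d ∈ D \ Vset D m, (d.1ᶜ ∪ d.2) :=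
  mem_biInter_material_iff.2 fun _ hd hv => hd.2 ⟨hd.1, hv⟩

lemma subset_sdiff_vset (hB : B ⊆ D) (hm : m ∈ ⋂ d ∈ B, (d.1ᶜ ∪ d.2)) :
    B ⊆ D \ Vset D m :=
  fun d hd => ⟨hB hd, fun hv => mem_biInter_material_iff.1 hm d hd hv.2⟩

lemma LexBasis.not_serious_vset (hD : D.Finite) (hB : LexBasis D k a B)
    (hmB : m ∈ ⋂ d ∈ B, (d.1ᶜ ∪ d.2)) (hm' : m' ∈ a) :
    ¬ Serious D k (Vset D m') (Vset D m) := fun hser =>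
  hB.2.2 (D \ Vset D m') sdiff_subset ⟨m', hm', mem_biInter_material_sdiff_vset D m'⟩
    (serious_of_subset_of_serious hD (subset_sdiff_vset hB.1 hmB) (hser.sdiff_swap hD))

lemma lexBasis_sdiff_vset (hD : D.Finite) (hma : m ∈ a)
    (hmin : ∀ m' ∈ a, ¬ Serious D k (Vset D m') (Vset D m)) :
    LexBasis D k a (D \ Vset D m) := by
  refine ⟨sdiff_subset, ⟨m, hma, mem_biInter_material_sdiff_vset D m⟩, ?_⟩
  rintro B' hB' ⟨m', hm'a, hm'B'⟩ hser
  have hswap := (serious_of_serious_of_subset hD hser (subset_sdiff_vset hB' hm'B')).sdiff_swap hD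
  rw [sdiff_sdiff_cancel_left (vset_subset D m), sdiff_sdiff_cancel_left (vset_subset D m')]
    at hswap
  exact hmin m' hm'a hswap

end Models

theorem lexClos_iff_bases_general
    (D : Set (Default M)) (hD : D.Finite) (k : ℕ) (a b : Set M) :
    LexClos D k a b ↔
      ∀ B : Set (Default M), LexBasis D k a B → EntailsWith B a b := by
  constructor
  · rintro h B hB m ⟨hma, hmB⟩
    exact h m hma fun m' hm' => hB.not_serious_vset hD hmB hm'
  · intro h m hma hmin
    exact h _ (lexBasis_sdiff_vset hD hma hmin) ⟨hma, mem_biInter_material_sdiff_vset D m⟩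

/-- The default `(a,b)` is in the lexicographic closure of `D` iff for every basis
`B` for `a`, `B̃, a ⊨ b`. -/
theorem lexClos_iff_bases
    (D : Set (Default M)) (hD : D.Finite) (k : ℕ) (hk : IsOrder D k) (a b : Set M) :
    LexClos D k a b ↔
      ∀ B : Set (Default M), LexBasis D k a B → EntailsWith B a b :=
  lexClos_iff_bases_general D hD k a b
end

section
/- Let D be a finite set of defaults. The lexicographic closure D^l of D satisfies rational monotonicity: whenever (a,b) ∈ D^l and (a, cᶜ) ∉ D^l, also (a ∩ c, b) ∈ D^l. -/
open Set

variable {M : Type*}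

/-!
The seriousness ordering compares sets of defaults by a key in the lexicographically ordered
space `Fin (k + 1) → ℕ`, which is linearly ordered. A consequence relation defined by
minimality with respect to a key in a linear order is rational: if some minimal model of `a`
satisfies `c`, the minimal models of `a ∩ c` are exactly the minimal models of `a` that satisfy
`c`, so they inherit every consequence `b` of `a`.
-/

def RankedConsequence {α : Type*} [LT α] (f : M → α) (a b : Set M) : Prop :=
  ∀ m ∈ a, (∀ m' ∈ a, ¬ f m' < f m) → m ∈ b

theorem RankedConsequence.rational_monotonicity {α : Type*} [LinearOrder α] {f : M → α}
    {a b c : Set M} (hab : RankedConsequence f a b) (hnc : ¬ RankedConsequence f a cᶜ) :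
    RankedConsequence f (a ∩ c) b := by
  simp only [RankedConsequence, not_forall, not_lt, mem_compl_iff, not_not] at hab hnc ⊢
  obtain ⟨m₀, hm₀a, hm₀min, hm₀c⟩ := hnc
  rintro m ⟨hma, -⟩ hmmin
  refine hab m hma fun m' hm'a => ?_
  calc f m ≤ f m₀ := hmmin m₀ ⟨hm₀a, hm₀c⟩
    _ ≤ f m' := hm₀min m' hm'a

/-- The tuple `t(X)` as an element of the lexicographically ordered `Fin (k + 1) → ℕ`. -/
noncomputable def seriousnessKey (D : Set (Default M)) (k : ℕ) (X : Set (Default M)) :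
    Lex (Fin (k + 1) → ℕ) :=
  toLex fun i => tup D k X i

theorem serious_iff_seriousnessKey_lt {D : Set (Default M)} {k : ℕ} {X Y : Set (Default M)} :
    Serious D k X Y ↔ seriousnessKey D k X < seriousnessKey D k Y := by
  constructor
  · rintro ⟨j, hjk, heq, hlt⟩
    exact ⟨⟨j, Nat.lt_succ_of_le hjk⟩, fun i hi => heq i hi, hlt⟩
  · rintro ⟨⟨j, hjk⟩, heq, hlt⟩
    exact ⟨j, Nat.le_of_lt_succ hjk,
      fun i hi => heq ⟨i, hi.trans hjk⟩ hi, hlt⟩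

theorem lexClos_iff_rankedConsequence {D : Set (Default M)} {k : ℕ} {a b : Set M} :
    LexClos D k a b ↔ RankedConsequence (seriousnessKey D k ∘ Vset D) a b := by
  simp only [LexClos, RankedConsequence, Function.comp_apply, serious_iff_seriousnessKey_lt]

theorem lexClos_rational_monotonicity_general
    (D : Set (Default M)) (k : ℕ)
    (a b c : Set M) (hab : LexClos D k a b) (hnc : ¬ LexClos D k a cᶜ) :
    LexClos D k (a ∩ c) b := by
  rw [lexClos_iff_rankedConsequence] at hab hnc ⊢
  exact hab.rational_monotonicity hnc

/-- The lexicographic closure satisfies rational monotonicity. -/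
theorem lexClos_rational_monotonicity
    (D : Set (Default M)) (hD : D.Finite) (k : ℕ) (hk : IsOrder D k)
    (a b c : Set M) (hab : LexClos D k a b) (hnc : ¬ LexClos D k a cᶜ) :
    LexClos D k (a ∩ c) b :=
  lexClos_rational_monotonicity_general D k a b c hab hnc
end

section
/- Let D be a finite set of defaults. There is no basis for a formula a if and only if a is a logical contradiction, i.e., a = ∅. -/
open Set

variable {M : Type*}

open Function

section Seriousness

variable (D : Set (Default M)) (k : ℕ)

theorem serious_irrefl (X : Set (Default M)) : ¬ Serious D k X X := by
  rintro ⟨j, -, -, hlt⟩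
  exact hlt.false

theorem serious_trans {X Y Z : Set (Default M)} :
    Serious D k X Y → Serious D k Y Z → Serious D k X Z := by
  rintro ⟨j₁, hj₁, heq₁, hlt₁⟩ ⟨j₂, hj₂, heq₂, hlt₂⟩
  rcases lt_trichotomy j₁ j₂ with h | rfl | h
  · exact ⟨j₁, hj₁, fun i hi => (heq₁ i hi).trans (heq₂ i (hi.trans h)), heq₂ j₁ h ▸ hlt₁⟩
  · exact ⟨j₁, hj₁, fun i hi => (heq₁ i hi).trans (heq₂ i hi), hlt₁.trans hlt₂⟩
  · exact ⟨j₂, hj₂, fun i hi => (heq₁ i (hi.trans h)).trans (heq₂ i hi), (heq₁ j₂ h).symm ▸ hlt₂⟩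

instance : IsStrictOrder (Set (Default M)) (Serious D k) where
  irrefl := serious_irrefl D k
  trans _ _ _ := serious_trans D k

end Seriousness

theorem consistentWith_empty {c : Set M} : ConsistentWith c ∅ ↔ c.Nonempty := by
  simp [ConsistentWith]

theorem ConsistentWith.nonempty {c : Set M} {B : Set (Default M)} (h : ConsistentWith c B) :
    c.Nonempty :=
  h.mono inter_subset_left

theorem exists_lexBasis_of_nonempty {D : Set (Default M)} (hD : D.Finite) (k : ℕ) {a : Set M}
    (ha : a.Nonempty) : ∃ B, LexBasis D k a B := by
  let S := {B | B ⊆ D ∧ ConsistentWith a B}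
  have hS : S.Finite := hD.finite_subsets.subset fun _ hB => hB.1
  obtain ⟨⟨B, hB⟩, -, hmax⟩ := (hS.wellFoundedOn (r := swap (Serious D k))).has_min univ
    ⟨⟨∅, empty_subset D, consistentWith_empty.2 ha⟩, trivial⟩
  exact ⟨B, hB.1, hB.2, fun B' hsub hcons => hmax ⟨B', hsub, hcons⟩ trivial⟩

theorem no_basis_iff_contradiction_general
    (D : Set (Default M)) (hD : D.Finite) (k : ℕ) (a : Set M) :
    (¬ ∃ B : Set (Default M), LexBasis D k a B) ↔ a = ∅ := by
  rw [not_iff_comm, ← ne_eq, ← nonempty_iff_ne_empty]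
  exact ⟨exists_lexBasis_of_nonempty hD k, fun ⟨_, _, hcons, _⟩ => hcons.nonempty⟩

/-- There is no basis for `a` iff `a` is a logical contradiction. -/
theorem no_basis_iff_contradiction
    (D : Set (Default M)) (hD : D.Finite) (k : ℕ) (hk : IsOrder D k) (a : Set M) :
    (¬ ∃ B : Set (Default M), LexBasis D k a B) ↔ a = ∅ :=
  no_basis_iff_contradiction_general D hD k a
end

section
/- Let D be a finite set of defaults. The lexicographic closure D^l of D satisfies the preferential closure conditions: reflexivity ((a,a) ∈ D^l for every formula a); right weakening (if (a,b) ∈ D^l and b ⊆ c then (a,c) ∈ D^l); And (if (a,b) ∈ D^l and (a,c) ∈ D^l then (a, b ∩ c) ∈ D^l); Or (if (a,c) ∈ D^l and (b,c) ∈ D^l then (a ∪ b, c) ∈ D^l); and cautious monotonicity (if (a,b) ∈ D^l and (a,c) ∈ D^l then (a ∩ b, c) ∈ D^l). -/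
/-!
Comparing models by the seriousness of the defaults they violate is the same as comparing
their tuples in the lexicographic order on `Fin (k + 1) → ℕ`, which is a well-founded linear
order. Reflexivity, right weakening, And and Or hold for minimal-model entailment under any
ranking. For cautious monotonicity, a `≺`-minimal model `m₀` of `a` satisfies `b`, so a minimal
model `m` of `a ∩ b` has the same rank as `m₀` and is therefore already minimal in `a`.
-/

open Set

variable {M : Type*}

variable {α : Type*}

def PrefEntails [LT α] (f : M → α) (a b : Set M) : Prop :=
  ∀ m ∈ a, (∀ m' ∈ a, ¬ f m' < f m) → m ∈ b

namespace PrefEntails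

section LT

variable [LT α] {f : M → α} {a b c : Set M}

theorem refl (f : M → α) (a : Set M) : PrefEntails f a a :=
  fun _ hm _ => hm

theorem mono_right (hab : PrefEntails f a b) (hbc : b ⊆ c) : PrefEntails f a c :=
  fun m hm hmin => hbc (hab m hm hmin)

theorem inter_right (hab : PrefEntails f a b) (hac : PrefEntails f a c) :
    PrefEntails f a (b ∩ c) :=
  fun m hm hmin => ⟨hab m hm hmin, hac m hm hmin⟩

theorem union_left (hac : PrefEntails f a c) (hbc : PrefEntails f b c) :
    PrefEntails f (a ∪ b) c := by
  rintro m (hma | hmb) hmin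
  · exact hac m hma fun m' hm' => hmin m' (Or.inl hm')
  · exact hbc m hmb fun m' hm' => hmin m' (Or.inr hm')

end LT

theorem cautious_mono [LinearOrder α] [WellFoundedLT α] {f : M → α} {a b c : Set M}
    (hab : PrefEntails f a b) (hac : PrefEntails f a c) : PrefEntails f (a ∩ b) c := by
  intro m hm hmin
  obtain ⟨m₀, hm₀a, hm₀min⟩ := (InvImage.wf f wellFounded_lt).has_min a ⟨m, hm.1⟩
  have hm₀b : m₀ ∈ b := hab m₀ hm₀a hm₀min
  have hrank : f m = f m₀ :=
    le_antisymm (not_lt.mp (hmin m₀ ⟨hm₀a, hm₀b⟩)) (not_lt.mp (hm₀min m hm.1))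
  exact hac m hm.1 fun m' hm' => hrank ▸ hm₀min m' hm'

end PrefEntails

noncomputable def tupLex (D : Set (Default M)) (k : ℕ) (X : Set (Default M)) :
    Lex (Fin (k + 1) → ℕ) :=
  toLex fun i => tup D k X i

theorem serious_iff_tupLex_lt (D : Set (Default M)) (k : ℕ) (X Y : Set (Default M)) :
    Serious D k X Y ↔ tupLex D k X < tupLex D k Y := by
  constructor
  · rintro ⟨j, hjk, hpre, hlt⟩
    exact ⟨⟨j, Nat.lt_succ_of_le hjk⟩, fun i hi => hpre i hi, hlt⟩
  · rintro ⟨i, hpre, hlt⟩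
    exact ⟨i, Nat.le_of_lt_succ i.isLt, fun j hj => hpre ⟨j, hj.trans i.isLt⟩ hj, hlt⟩

theorem lexClos_iff_prefEntails (D : Set (Default M)) (k : ℕ) (a b : Set M) :
    LexClos D k a b ↔ PrefEntails (fun m => tupLex D k (Vset D m)) a b := by
  simp only [LexClos, PrefEntails, serious_iff_tupLex_lt]

theorem lexClos_preferential_general
    (D : Set (Default M)) (k : ℕ) :
    (∀ a : Set M, LexClos D k a a) ∧
      (∀ a b c : Set M, LexClos D k a b → b ⊆ c → LexClos D k a c) ∧
      (∀ a b c : Set M, LexClos D k a b → LexClos D k a c → LexClos D k a (b ∩ c)) ∧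
      (∀ a b c : Set M, LexClos D k a c → LexClos D k b c → LexClos D k (a ∪ b) c) ∧
      (∀ a b c : Set M, LexClos D k a b → LexClos D k a c → LexClos D k (a ∩ b) c) := by
  simp only [lexClos_iff_prefEntails]
  exact ⟨PrefEntails.refl _, fun _ _ _ => PrefEntails.mono_right,
    fun _ _ _ => PrefEntails.inter_right, fun _ _ _ => PrefEntails.union_left,
    fun _ _ _ => PrefEntails.cautious_mono⟩

/-- The lexicographic closure satisfies the preferential closure conditions:
reflexivity, right weakening, And, Or, and cautious monotonicity. -/
theorem lexClos_preferential
    (D : Set (Default M)) (hD : D.Finite) (k : ℕ) (hk : IsOrder D k) :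
    (∀ a : Set M, LexClos D k a a) ∧
      (∀ a b c : Set M, LexClos D k a b → b ⊆ c → LexClos D k a c) ∧
      (∀ a b c : Set M, LexClos D k a b → LexClos D k a c → LexClos D k a (b ∩ c)) ∧
      (∀ a b c : Set M, LexClos D k a c → LexClos D k b c → LexClos D k (a ∪ b) c) ∧
      (∀ a b c : Set M, LexClos D k a b → LexClos D k a c → LexClos D k (a ∩ b) c) :=
  lexClos_preferential_general D k
end

section
/- Let a and b be formulas and let |~ be the consequence relation defined by the two-level modular model of the single default (a,b): a model is at the bottom level iff it satisfies the material implication aᶜ ∪ b, and at the top level otherwise; c |~ d iff every model of c at the lowest level containing a model of c satisfies d. Then |~ satisfies rational monotonicity: whenever c |~ d and it is not the case that c |~ eᶜ, also c ∩ e |~ d. -/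
/-- `c |~ d` in the ranked model with rank function `r`: the `r`-minimal models of `c`
satisfy `d`. -/
def RankedEntails {M R : Type*} [Preorder R] (r : M → R) (c d : Set M) : Prop :=
  ∀ m ∈ c, (∀ m' ∈ c, r m ≤ r m') → m ∈ d

theorem RankedEntails.inter_of_not_compl {M R : Type*} [Preorder R] {r : M → R}
    {c d e : Set M} (hcd : RankedEntails r c d) (hne : ¬ RankedEntails r c eᶜ) :
    RankedEntails r (c ∩ e) d := by
  obtain ⟨m₀, hm₀c, hm₀_min, hm₀e⟩ : ∃ m₀ ∈ c, (∀ m' ∈ c, r m₀ ≤ r m') ∧ m₀ ∈ e := by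
    simpa [RankedEntails] using hne
  -- a minimal model of `c ∩ e` lies no higher than `m₀`, so it is minimal in `c` too
  intro m hm hm_min
  exact hcd m hm.1 fun m' hm' => (hm_min m₀ ⟨hm₀c, hm₀e⟩).trans (hm₀_min m' hm')

open Set Classical in
/-- The consequence relation of the two-level modular model of the single default
`(a, b)` (bottom level: models of the material implication `aᶜ ∪ b`; top level: the
rest) satisfies rational monotonicity. -/
theorem single_default_rational_monotonicity {M : Type*} (a b c d e : Set M)
    (hcd : ∀ m ∈ c,
      (∀ m' ∈ c, (if m ∈ aᶜ ∪ b then (0 : ℕ) else 1) ≤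
        (if m' ∈ aᶜ ∪ b then (0 : ℕ) else 1)) → m ∈ d)
    (hne : ¬ ∀ m ∈ c,
      (∀ m' ∈ c, (if m ∈ aᶜ ∪ b then (0 : ℕ) else 1) ≤
        (if m' ∈ aᶜ ∪ b then (0 : ℕ) else 1)) → m ∈ eᶜ) :
    ∀ m ∈ c ∩ e,
      (∀ m' ∈ c ∩ e, (if m ∈ aᶜ ∪ b then (0 : ℕ) else 1) ≤
        (if m' ∈ aᶜ ∪ b then (0 : ℕ) else 1)) → m ∈ d :=
  RankedEntails.inter_of_not_compl (r := fun m => if m ∈ aᶜ ∪ b then 0 else 1) hcd hne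
end
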